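/- For every positive odd integer n, the set H = {k : 1 ≤ k < 4n, k not ≡ 0 (mod 4)} can be partitioned into n triples such that each triple sums to either 4n−2 or 8n−2, and each triple contains exactly one integer from each nonzero residue class modulo 4. -/

import Mathlib

/-!
Take the triples `{4i+1, 4i+2, 4σ(i)+3}` for `i < n`, where `σ(i) ≡ -2(i+1) (mod n)`. Since `n` is
odd, `2` is invertible mod `n`, so `σ` permutes `{0, …, n-1}` and the triples partition `H`. The
sum of the `i`-th triple is `4(2i + σ(i) + 2) - 2`, and `2i + σ(i) + 2` is a multiple of `n` in
`(0, 3n)`, hence equal to `n` or `2n`.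
-/

open Finset

namespace OddResidueTriples

def triple (i j : ℕ) : Finset ℕ := {4 * i + 1, 4 * i + 2, 4 * j + 3}

lemma mem_triple {i j x : ℕ} : x ∈ triple i j ↔ x = 4 * i + 1 ∨ x = 4 * i + 2 ∨ x = 4 * j + 3 := by
  simp [triple]

lemma card_triple (i j : ℕ) : (triple i j).card = 3 := by
  rw [triple, card_insert_of_notMem (by simp; omega), card_insert_of_notMem (by simp; omega),
    card_singleton]

lemma sum_triple (i j : ℕ) : ∑ x ∈ triple i j, x = 4 * (2 * i + j + 2) - 2 := by
  rw [triple, sum_insert (by simp; omega), sum_insert (by simp; omega), sum_singleton]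
  omega

lemma existsUnique_mem_triple_mod_four (i j : ℕ) {r : ℕ} (hr1 : 1 ≤ r) (hr4 : r < 4) :
    ∃! x, x ∈ triple i j ∧ x % 4 = r := by
  simp only [mem_triple]
  interval_cases r
  · exact ⟨4 * i + 1, by omega, fun y hy => by omega⟩
  · exact ⟨4 * i + 2, by omega, fun y hy => by omega⟩
  · exact ⟨4 * j + 3, by omega, fun y hy => by omega⟩

def tripleFamily (n : ℕ) (σ : ℕ → ℕ) : Finset (Finset ℕ) :=
  (range n).image fun i => triple i (σ i)

lemma card_tripleFamily (n : ℕ) (σ : ℕ → ℕ) : (tripleFamily n σ).card = n := by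
  rw [tripleFamily, card_image_of_injOn, card_range]
  intro a _ b _ hab
  have : 4 * a + 1 ∈ triple b (σ b) := by
    rw [← show triple a (σ a) = triple b (σ b) from hab, mem_triple]
    exact Or.inl rfl
  rw [mem_triple] at this
  omega

lemma pairwiseDisjoint_tripleFamily {n : ℕ} {σ : ℕ → ℕ} (hσ : Set.InjOn σ (Set.Iio n)) :
    (tripleFamily n σ : Set (Finset ℕ)).PairwiseDisjoint id := by
  simp only [tripleFamily, coe_image, coe_range]
  rintro _ ⟨i, hi, rfl⟩ _ ⟨j, hj, rfl⟩ hne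
  have hij : i ≠ j := fun h => hne (by rw [h])
  rw [Function.onFun, id, id, disjoint_left]
  intro x hxi hxj
  rw [mem_triple] at hxi hxj
  rcases hxi with h | h | h <;> rcases hxj with h' | h' | h' <;> try omega
  exact hij (hσ hi hj (by omega))

lemma sup_tripleFamily {n : ℕ} {σ : ℕ → ℕ} (hσ : Set.BijOn σ (Set.Iio n) (Set.Iio n)) :
    (tripleFamily n σ).sup id = (Ico 1 (4 * n)).filter (fun k => k % 4 ≠ 0) := by
  ext k
  simp only [tripleFamily, sup_image, mem_sup, mem_range, mem_filter, mem_Ico, Function.comp_apply,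
    id_eq, mem_triple]
  constructor
  · rintro ⟨i, hi, hk⟩
    have : σ i < n := hσ.mapsTo hi
    omega
  · rintro ⟨⟨hk1, hk4n⟩, hk4⟩
    rcases (by omega : k % 4 = 1 ∨ k % 4 = 2 ∨ k % 4 = 3) with hk | hk | hk
    · exact ⟨k / 4, by omega, by omega⟩
    · exact ⟨k / 4, by omega, by omega⟩
    · obtain ⟨i, hi, hσi⟩ := hσ.surjOn (show k / 4 < n by omega)
      exact ⟨i, hi, by omega⟩

def partner (n i : ℕ) : ℕ := (2 * n - 2 - 2 * i) % n

lemma partner_lt {n : ℕ} (hn : 0 < n) (i : ℕ) : partner n i < n := Nat.mod_lt _ hn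

lemma dvd_two_mul_add_partner {n i : ℕ} (hi : i < n) : n ∣ 2 * i + 2 + partner n i := by
  rw [← Nat.modEq_zero_iff_dvd]
  calc 2 * i + 2 + partner n i ≡ 2 * i + 2 + (2 * n - 2 - 2 * i) [MOD n] :=
        (Nat.mod_modEq _ n).add_left _
    _ = 2 * n := by omega
    _ ≡ 0 [MOD n] := Nat.modEq_zero_iff_dvd.2 (dvd_mul_left n 2)

lemma partner_injOn {n : ℕ} (ho : Odd n) : Set.InjOn (partner n) (Set.Iio n) := by
  intro i hi j hj hij
  have hi : i < n := hi
  have hj : j < n := hj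
  have h : 2 * i + 2 + partner n i ≡ 2 * j + 2 + partner n i [MOD n] := by
    refine (Nat.modEq_zero_iff_dvd.2 (dvd_two_mul_add_partner hi)).trans ?_
    rw [hij]
    exact (Nat.modEq_zero_iff_dvd.2 (dvd_two_mul_add_partner hj)).symm
  have h2 : 2 * i ≡ 2 * j [MOD n] := Nat.ModEq.add_right_cancel' 2 (h.add_right_cancel' _)
  exact (Nat.ModEq.cancel_left_of_coprime (Nat.coprime_two_right.2 ho) h2).eq_of_lt_of_lt hi hj

lemma partner_bijOn {n : ℕ} (ho : Odd n) : Set.BijOn (partner n) (Set.Iio n) (Set.Iio n) :=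
  ((Set.finite_Iio n).injOn_iff_bijOn_of_mapsTo fun i _ => partner_lt ho.pos i).1 (partner_injOn ho)

lemma eq_or_eq_two_mul_of_dvd {n m : ℕ} (hdvd : n ∣ m) (hpos : 0 < m) (hlt : m < 3 * n) :
    m = n ∨ m = 2 * n := by
  obtain ⟨k, rfl⟩ := hdvd
  have hk : k < 3 := by nlinarith
  interval_cases k <;> omega

end OddResidueTriples

open OddResidueTriples in
theorem stmt_3_general (n : ℕ) (ho : Odd n) :
    ∃ T : Finset (Finset ℕ), T.card = n ∧
      (T : Set (Finset ℕ)).PairwiseDisjoint id ∧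
      T.sup id = (Finset.Ico 1 (4 * n)).filter (fun k => k % 4 ≠ 0) ∧
      ∀ t ∈ T, t.card = 3 ∧ ((∑ x ∈ t, x) = 4 * n - 2 ∨ (∑ x ∈ t, x) = 8 * n - 2) ∧
        ∀ r, 1 ≤ r → r < 4 → ∃! x, x ∈ t ∧ x % 4 = r := by
  refine ⟨tripleFamily n (partner n), card_tripleFamily n _,
    pairwiseDisjoint_tripleFamily (partner_injOn ho), sup_tripleFamily (partner_bijOn ho), ?_⟩
  simp only [tripleFamily, mem_image, mem_range]
  rintro _ ⟨i, hi, rfl⟩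
  refine ⟨card_triple _ _, ?_, fun r => existsUnique_mem_triple_mod_four _ _⟩
  have hσ := partner_lt ho.pos i
  rw [sum_triple]
  rcases eq_or_eq_two_mul_of_dvd (dvd_two_mul_add_partner hi) (by omega) (by omega) with h | h <;>
    omega

theorem stmt_3 (n : ℕ) (hn : 0 < n) (ho : Odd n) :
    ∃ T : Finset (Finset ℕ), T.card = n ∧
      (T : Set (Finset ℕ)).PairwiseDisjoint id ∧
      T.sup id = (Finset.Ico 1 (4 * n)).filter (fun k => k % 4 ≠ 0) ∧
      ∀ t ∈ T, t.card = 3 ∧ ((∑ x ∈ t, x) = 4 * n - 2 ∨ (∑ x ∈ t, x) = 8 * n - 2) ∧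
        ∀ r, 1 ≤ r → r < 4 → ∃! x, x ∈ t ∧ x % 4 = r :=
  stmt_3_general n ho
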